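/- arXiv:2205.04954 — 3 statements merged into one kernel-verified Lean document; each statement's English description precedes it below -/
import Mathlib

section
/- Let n ≥ 0 and index (n+1)×(n+1) real matrices by Fin 1 ⊕ Fin n. For every orthogonal matrix A ∈ O(n+1) there exist ε ∈ {1, −1} and an orthogonal matrix B ∈ O(n) such that A is joined to the block matrix Matrix.fromBlocks (ε • 1) 0 0 B by a continuous path inside O(n+1). In other words, the block-sum homomorphism O(n) × O(1) → O(n+1) is surjective on path components. -/
/-!
The first column `u` of `A` is a unit vector. Unless `u = ±e₁`, the rotation by the angle
`arccos ⟪e₁, u⟫` in the plane spanned by `e₁` and `u` moves `u` to `e₁`, and the rotations by the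
smaller angles form a path in `O(n+1)` from the identity to it; composing with `A` joins `A` to a
matrix with first column `±e₁`. An orthogonal matrix with first column `±e₁` is block diagonal,
with an orthogonal lower block.
-/

open Matrix Real

namespace Matrix

section Rotation

variable {ι : Type*} [Fintype ι] [DecidableEq ι]

/-- For orthonormal `e, w`: the rotation by `θ` of the plane spanned by `e, w` (taking `e` to
`cos θ • e - sin θ • w`), extended by the identity on its orthogonal complement. -/
noncomputable def planeRotation (e w : ι → ℝ) (θ : ℝ) : Matrix ι ι ℝ :=
  1 + (cos θ - 1) • (vecMulVec e e + vecMulVec w w) + sin θ • (vecMulVec e w - vecMulVec w e)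

variable {e w : ι → ℝ}

lemma planeRotation_mem_orthogonalGroup (he : e ⬝ᵥ e = 1) (hw : w ⬝ᵥ w = 1)
    (hew : e ⬝ᵥ w = 0) (θ : ℝ) : planeRotation e w θ ∈ orthogonalGroup ι ℝ := by
  have hwe : w ⬝ᵥ e = 0 := by rwa [dotProduct_comm]
  rw [mem_orthogonalGroup_iff]
  simp only [planeRotation, transpose_add, transpose_smul, transpose_sub, transpose_one,
    transpose_vecMulVec, mul_add, add_mul, mul_sub, sub_mul, smul_mul_assoc, mul_smul_comm,
    one_mul, mul_one, vecMulVec_mul_vecMulVec, he, hw, hew, hwe, one_smul, zero_smul,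
    vecMulVec_zero]
  match_scalars <;> linarith [cos_sq_add_sin_sq θ]

lemma planeRotation_mulVec_cos_smul_add_sin_smul (he : e ⬝ᵥ e = 1) (hw : w ⬝ᵥ w = 1)
    (hew : e ⬝ᵥ w = 0) (θ : ℝ) : planeRotation e w θ *ᵥ (cos θ • e + sin θ • w) = e := by
  have hwe : w ⬝ᵥ e = 0 := by rwa [dotProduct_comm]
  simp only [planeRotation, add_mulVec, sub_mulVec, smul_mulVec, one_mulVec, vecMulVec_mulVec,
    dotProduct_add, dotProduct_smul, he, hw, hew, hwe, smul_eq_mul, op_smul_eq_smul]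
  match_scalars <;> linarith [cos_sq_add_sin_sq θ]

lemma joined_one_planeRotation (he : e ⬝ᵥ e = 1) (hw : w ⬝ᵥ w = 1) (hew : e ⬝ᵥ w = 0)
    (θ : ℝ) :
    Joined (1 : orthogonalGroup ι ℝ)
      ⟨planeRotation e w θ, planeRotation_mem_orthogonalGroup he hw hew θ⟩ := by
  let f : ℝ → orthogonalGroup ι ℝ := fun t ↦
    ⟨planeRotation e w t, planeRotation_mem_orthogonalGroup he hw hew t⟩
  have hf : Continuous f := by
    refine Continuous.subtype_mk ?_ _
    unfold planeRotation
    fun_prop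
  have hf0 : f 0 = 1 := Subtype.ext (by simp [f, planeRotation])
  simpa [hf0] using (PathConnectedSpace.joined (0 : ℝ) θ).map hf

lemma exists_joined_one_mulVec_eq_sign_smul {u : ι → ℝ} (he : e ⬝ᵥ e = 1) (hu : u ⬝ᵥ u = 1) :
    ∃ ε : ℝ, (ε = 1 ∨ ε = -1) ∧
      ∃ R : orthogonalGroup ι ℝ, Joined 1 R ∧ (R : Matrix ι ι ℝ) *ᵥ u = ε • e := by
  set c := e ⬝ᵥ u
  set v := u - c • e with hv
  have hev : e ⬝ᵥ v = 0 := by simp [v, c, he]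
  have hvv : v ⬝ᵥ v = 1 - c ^ 2 := by
    simp only [v, sub_dotProduct, dotProduct_sub, smul_dotProduct, dotProduct_smul, hu, he,
      dotProduct_comm u e, smul_eq_mul]
    ring
  by_cases hv0 : v = 0
  · have hc : c ^ 2 = 1 := by
      rw [hv0, zero_dotProduct] at hvv
      linarith
    refine ⟨c, sq_eq_one_iff.mp hc, 1, Joined.refl 1, ?_⟩
    rw [OneMemClass.coe_one, one_mulVec, ← sub_eq_zero, ← hv0]
  have hc : c ^ 2 < 1 := by
    have : 0 < v ⬝ᵥ v := by simpa using dotProduct_self_star_pos_iff.mpr hv0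
    linarith
  obtain ⟨hc₁, hc₂⟩ := abs_lt.mp (sq_lt_one_iff_abs_lt_one c |>.mp hc)
  set θ := arccos c
  have hcos : cos θ = c := cos_arccos hc₁.le hc₂.le
  have hsin : 0 < sin θ := sin_pos_of_pos_of_lt_pi (arccos_pos.mpr hc₂) (arccos_lt_pi.mpr hc₁)
  have hsin_sq : sin θ ^ 2 = v ⬝ᵥ v := by rw [hvv, ← hcos, sin_sq]
  set w := (sin θ)⁻¹ • v
  have hw : w ⬝ᵥ w = 1 := by
    simp only [w, smul_dotProduct, dotProduct_smul, ← hsin_sq, smul_eq_mul]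
    field_simp
  have hew : e ⬝ᵥ w = 0 := by simp [w, hev]
  have hu_eq : u = cos θ • e + sin θ • w := by
    rw [hcos, smul_smul, mul_inv_cancel₀ hsin.ne', one_smul, hv, add_sub_cancel]
  exact ⟨1, Or.inl rfl, _, joined_one_planeRotation he hw hew θ, by
    rw [one_smul, hu_eq]; exact planeRotation_mulVec_cos_smul_add_sin_smul he hw hew θ⟩

end Rotation

section Blocks

variable {m n : Type*} [Fintype m] [Fintype n] [DecidableEq m] [DecidableEq n]

lemma dotProduct_mulVec_mulVec_of_mem_orthogonalGroup {A : Matrix n n ℝ}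
    (hA : A ∈ orthogonalGroup n ℝ) (x y : n → ℝ) : (A *ᵥ x) ⬝ᵥ (A *ᵥ y) = x ⬝ᵥ y := by
  rw [dotProduct_mulVec, ← vecMul_transpose, vecMul_vecMul, (mem_orthogonalGroup_iff' n ℝ).mp hA,
    vecMul_one]

lemma eq_zero_and_mem_orthogonalGroup_of_fromBlocks_zero₂₁_mem {P : Matrix m m ℝ}
    {Q : Matrix m n ℝ} {S : Matrix n n ℝ} (h : fromBlocks P Q 0 S ∈ orthogonalGroup (m ⊕ n) ℝ) :
    Q = 0 ∧ S ∈ orthogonalGroup n ℝ := by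
  have h₁ := (mem_orthogonalGroup_iff' _ ℝ).mp h
  have h₂ := (mem_orthogonalGroup_iff _ ℝ).mp h
  simp only [fromBlocks_transpose, fromBlocks_multiply, ← fromBlocks_one, fromBlocks_inj,
    transpose_zero, Matrix.mul_zero, Matrix.zero_mul, add_zero, zero_add] at h₁ h₂
  have hP : P * Pᵀ = 1 := mul_eq_one_comm.mp h₁.1
  have hQ : Q = 0 := by
    rw [← self_mul_conjTranspose_eq_zero, conjTranspose_eq_transpose_of_trivial]
    simpa [hP] using h₂.1
  refine ⟨hQ, (mem_orthogonalGroup_iff n ℝ).mpr ?_⟩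
  simpa [hQ] using h₂.2.2.2

lemma exists_eq_fromBlocks_of_mulVec_single_eq {C : Matrix (Fin 1 ⊕ n) (Fin 1 ⊕ n) ℝ}
    (hC : C ∈ orthogonalGroup (Fin 1 ⊕ n) ℝ) {ε : ℝ}
    (h : C *ᵥ Pi.single (Sum.inl 0) 1 = ε • Pi.single (Sum.inl 0) 1) :
    ∃ B : orthogonalGroup n ℝ, C = fromBlocks (ε • 1) 0 0 (B : Matrix n n ℝ) := by
  rw [mulVec_single_one] at h
  have h₁₁ : C.toBlocks₁₁ = ε • 1 := by
    ext i j
    simpa [toBlocks₁₁, Subsingleton.elim i 0, Subsingleton.elim j 0] using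
      congrFun h (Sum.inl 0)
  have h₂₁ : C.toBlocks₂₁ = 0 := by
    ext i j
    simpa [toBlocks₂₁, Subsingleton.elim j 0] using congrFun h (Sum.inr i)
  rw [← fromBlocks_toBlocks C, h₁₁, h₂₁] at hC ⊢
  obtain ⟨hQ, hS⟩ := eq_zero_and_mem_orthogonalGroup_of_fromBlocks_zero₂₁_mem hC
  exact ⟨⟨_, hS⟩, by rw [hQ]⟩

end Blocks

end Matrix

/-- Every orthogonal matrix `A ∈ O(n+1)` is joined by a continuous path inside
`O(n+1)` to a block matrix `fromBlocks (ε • 1) 0 0 B` with `ε ∈ {1, -1}` and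
`B ∈ O(n)`: the block-sum homomorphism `O(n) × O(1) → O(n+1)` is surjective on
path components. -/
theorem blockSum_surjective_on_path_components (n : ℕ)
    (A : Matrix.orthogonalGroup (Fin 1 ⊕ Fin n) ℝ) :
    ∃ ε : ℝ, (ε = 1 ∨ ε = -1) ∧
      ∃ B : Matrix.orthogonalGroup (Fin n) ℝ,
        ∃ M : Matrix.orthogonalGroup (Fin 1 ⊕ Fin n) ℝ,
          (M : Matrix (Fin 1 ⊕ Fin n) (Fin 1 ⊕ Fin n) ℝ) =
            Matrix.fromBlocks (ε • (1 : Matrix (Fin 1) (Fin 1) ℝ)) 0 0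
              (B : Matrix (Fin n) (Fin n) ℝ) ∧
          Joined A M := by
  set e : Fin 1 ⊕ Fin n → ℝ := Pi.single (Sum.inl 0) 1
  have he : e ⬝ᵥ e = 1 := by simp [e]
  obtain ⟨ε, hε, R, hR, hRAe⟩ := exists_joined_one_mulVec_eq_sign_smul he
    ((dotProduct_mulVec_mulVec_of_mem_orthogonalGroup A.2 e e).trans he)
  obtain ⟨B, hB⟩ := exists_eq_fromBlocks_of_mulVec_single_eq (R * A).2 <| by
    rw [Submonoid.coe_mul, ← mulVec_mulVec, hRAe]
  exact ⟨ε, hε, B, R * A, hB, by simpa using hR.mul (Joined.refl A)⟩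
end

section
/- Let n ≥ 1, let S be the unit sphere of EuclideanSpace ℝ (Fin n), let e₀ ∈ S be the first standard basis vector, and let ℝP^{n−1} denote the quotient topological space of S by the equivalence relation identifying x with −x. Then A • [x] := [A.mulVec x] defines a continuous transitive action of O(n) on ℝP^{n−1}, and the map from the quotient space O(n) ⧸ K to ℝP^{n−1} induced by A ↦ [A.mulVec e₀] is a homeomorphism, where K = {A ∈ O(n) : A.mulVec e₀ = e₀ or A.mulVec e₀ = −e₀} is the stabilizer subgroup of the class [e₀]. -/
/-!
`O(n)` acts on the unit sphere by isometries, and transitively: the reflection in the hyperplane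
`(x - y)ᗮ` carries a unit vector `x` to the unit vector `y`. The action commutes with `x ↦ -x`, so
it descends to the antipodal quotient `ℝP^{n-1}`.
Since `O(n)` is compact (it is closed and its entries lie in `[-1, 1]`) and `ℝP^{n-1}` is
Hausdorff (the quotient map is open and the relation `x = ±y` is closed), the continuous bijection
`O(n) ⧸ stabLine n → ℝP^{n-1}`, `A ↦ [A e₀]`, is a homeomorphism.
-/

/-- The first standard basis vector of `EuclideanSpace ℝ (Fin n)`. -/
noncomputable def e0 (n : ℕ) : EuclideanSpace ℝ (Fin n) :=
  (WithLp.equiv 2 (Fin n → ℝ)).symm (fun i => if (i : ℕ) = 0 then (1 : ℝ) else 0)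

/-- Real projective space `ℝP^{n-1}`: the quotient of the unit sphere of
`EuclideanSpace ℝ (Fin n)` by the antipodal identification `x ∼ -x`. -/
abbrev RP (n : ℕ) : Type :=
  Quot (fun x y : Metric.sphere (0 : EuclideanSpace ℝ (Fin n)) 1 =>
    (x : EuclideanSpace ℝ (Fin n)) = -(y : EuclideanSpace ℝ (Fin n)))

/-- The stabilizer subgroup in `O(n)` of the projective class of `e₀`:
those `A` with `A e₀ = e₀` or `A e₀ = -e₀`. -/
def stabLine (n : ℕ) : Subgroup (Matrix.orthogonalGroup (Fin n) ℝ) where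
  carrier := {A | (A : Matrix (Fin n) (Fin n) ℝ).mulVec (e0 n) = e0 n ∨
    (A : Matrix (Fin n) (Fin n) ℝ).mulVec (e0 n) = -(e0 n)}
  one_mem' := by simp [Set.mem_setOf_eq, Matrix.one_mulVec]
  mul_mem' := by
    intro a b ha hb
    simp only [Set.mem_setOf_eq] at *
    have key : ((a * b : Matrix.orthogonalGroup (Fin n) ℝ) : Matrix (Fin n) (Fin n) ℝ).mulVec
        (e0 n) = (a : Matrix (Fin n) (Fin n) ℝ).mulVec
          ((b : Matrix (Fin n) (Fin n) ℝ).mulVec (e0 n)) := by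
      rw [Submonoid.coe_mul, Matrix.mulVec_mulVec]
    have hneg : (a : Matrix (Fin n) (Fin n) ℝ).mulVec (-(e0 n)) =
        -((a : Matrix (Fin n) (Fin n) ℝ).mulVec (e0 n)) := Matrix.mulVec_neg _ _
    rcases hb with hb | hb <;> rcases ha with ha | ha
    · left; rw [key, hb, ha]
    · right; rw [key, hb, ha]
    · right; rw [key, hb, hneg, ha]
    · left; rw [key, hb, hneg, ha, neg_neg]
  inv_mem' := by
    intro a ha
    simp only [Set.mem_setOf_eq] at *
    rcases ha with ha | ha
    · left
      conv_lhs => rw [← ha]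
      rw [Matrix.mulVec_mulVec]
      norm_cast
      rw [inv_mul_cancel]
      exact Matrix.one_mulVec _
    · right
      have h2 : e0 n = -((a : Matrix (Fin n) (Fin n) ℝ).mulVec (e0 n)) := by
        rw [ha, neg_neg]
      conv_lhs => rw [h2]
      rw [Matrix.mulVec_neg, Matrix.mulVec_mulVec, neg_inj]
      norm_cast
      rw [inv_mul_cancel]
      exact Matrix.one_mulVec _

open Metric Matrix MulAction

local notation "𝐏(" E ")" => Quot fun x y : sphere (0 : E) 1 ↦ (x : E) = -(y : E)

namespace MulAction

theorem exists_homeomorph_quotient_of_stabilizer_eq {G X : Type*} [Group G] [TopologicalSpace G]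
    [CompactSpace G] [TopologicalSpace X] [T2Space X] [MulAction G X] [ContinuousSMul G X]
    [IsPretransitive G X] {x : X} {H : Subgroup G} (hH : stabilizer G x = H) :
    ∃ h : G ⧸ H ≃ₜ X, ∀ g : G, h g = g • x := by
  subst hH
  have hcont : Continuous (ofQuotientStabilizer G x) :=
    continuous_quot_lift _ (continuous_id.smul continuous_const)
  have hbij : Function.Bijective (ofQuotientStabilizer G x) :=
    ⟨injective_ofQuotientStabilizer G x, fun y ↦ (exists_smul_eq G x y).elim fun g hg ↦ ⟨g, hg⟩⟩
  exact ⟨hcont.homeoOfEquivCompactToT2 (f := Equiv.ofBijective _ hbij), fun _ ↦ rfl⟩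

end MulAction

section AntipodalQuotient

variable {E : Type*} [NormedAddCommGroup E]

theorem antipodal_mk_eq_mk_iff {x y : sphere (0 : E) 1} :
    (Quot.mk _ x : 𝐏(E)) = Quot.mk _ y ↔ x = y ∨ x = -y := by
  have hequiv : Equivalence fun x y : sphere (0 : E) 1 ↦ x = y ∨ x = -y := by
    refine ⟨fun _ ↦ .inl rfl, fun h ↦ h.imp Eq.symm fun h ↦ by simp [h], fun h₁ h₂ ↦ ?_⟩
    rcases h₁ with rfl | rfl <;> rcases h₂ with rfl | rfl <;> simp
  refine ⟨fun h ↦ hequiv.eqvGen_iff.mp (Relation.EqvGen.mono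
    (fun _ _ h ↦ Or.inr (Subtype.ext h)) _ _ (Quot.eqvGen_exact h)), ?_⟩
  rintro (rfl | rfl)
  · rfl
  · exact Quot.sound (coe_neg_sphere _)

theorem isOpenQuotientMap_antipodal_mk :
    IsOpenQuotientMap (Quot.mk _ : sphere (0 : E) 1 → 𝐏(E)) := by
  refine ⟨Quot.exists_rep, continuous_quot_mk, fun U hU ↦ ?_⟩
  have hsat : Quot.mk _ ⁻¹' (Quot.mk _ '' U : Set 𝐏(E)) = U ∪ Neg.neg ⁻¹' U := by
    ext z
    simp only [Set.mem_preimage, Set.mem_image, Set.mem_union, antipodal_mk_eq_mk_iff]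
    grind
  rw [← isQuotientMap_quot_mk.isOpen_preimage, hsat]
  exact hU.union (hU.preimage continuous_neg)

instance : T2Space 𝐏(E) := by
  rw [t2Space_iff_of_isOpenQuotientMap isOpenQuotientMap_antipodal_mk]
  simp only [antipodal_mk_eq_mk_iff, Set.ofPred_or]
  exact isClosed_diagonal.union (isClosed_eq continuous_fst continuous_snd.neg)

end AntipodalQuotient

namespace Matrix

variable {ι 𝕜 : Type*} [Fintype ι] [DecidableEq ι] [RCLike 𝕜]

theorem isCompact_unitaryGroup : IsCompact (unitaryGroup ι 𝕜 : Set (Matrix ι ι 𝕜)) :=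
  (isCompact_univ_pi fun _ ↦ isCompact_univ_pi fun _ ↦ isCompact_closedBall (0 : 𝕜) 1)
    |>.of_isClosed_subset (isClosed_unitary (R := Matrix ι ι 𝕜)) fun _ hU i _ j _ ↦
      mem_closedBall_zero_iff.mpr (entry_norm_bound_of_unitary hU i j)

instance : CompactSpace (unitaryGroup ι 𝕜) :=
  isCompact_iff_compactSpace.mp isCompact_unitaryGroup

theorem toEuclideanCLM_mem_unitary_iff {A : Matrix ι ι 𝕜} :
    toEuclideanCLM (𝕜 := 𝕜) A ∈ unitary (EuclideanSpace 𝕜 ι →L[𝕜] EuclideanSpace 𝕜 ι) ↔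
      A ∈ unitaryGroup ι 𝕜 := by
  refine ⟨fun h ↦ ?_, Unitary.map_mem (toEuclideanCLM (n := ι))⟩
  rw [mem_unitaryGroup_iff']
  apply EquivLike.injective (toEuclideanCLM (n := ι) (𝕜 := 𝕜))
  rw [map_mul, map_star, map_one]
  exact Unitary.star_mul_self_of_mem h

theorem norm_toEuclideanCLM_of_mem_unitaryGroup {A : Matrix ι ι 𝕜} (hA : A ∈ unitaryGroup ι 𝕜)
    (x : EuclideanSpace 𝕜 ι) : ‖toEuclideanCLM (𝕜 := 𝕜) A x‖ = ‖x‖ :=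
  (toEuclideanCLM (𝕜 := 𝕜) A).norm_map_of_mem_unitary (toEuclideanCLM_mem_unitary_iff.mpr hA) x

variable {r : ℝ}

noncomputable instance : SMul (unitaryGroup ι 𝕜) (sphere (0 : EuclideanSpace 𝕜 ι) r) where
  smul A x := ⟨toEuclideanCLM (𝕜 := 𝕜) (A : Matrix ι ι 𝕜) x, by
    simp [norm_toEuclideanCLM_of_mem_unitaryGroup A.2]⟩

@[simp]
theorem coe_unitaryGroup_smul_sphere (A : unitaryGroup ι 𝕜)
    (x : sphere (0 : EuclideanSpace 𝕜 ι) r) :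
    ((A • x : sphere (0 : EuclideanSpace 𝕜 ι) r) : EuclideanSpace 𝕜 ι) =
      toEuclideanCLM (𝕜 := 𝕜) (A : Matrix ι ι 𝕜) x :=
  rfl

theorem ofLp_unitaryGroup_smul_sphere (A : unitaryGroup ι 𝕜)
    (x : sphere (0 : EuclideanSpace 𝕜 ι) r) :
    WithLp.ofLp ((A • x : sphere (0 : EuclideanSpace 𝕜 ι) r) : EuclideanSpace 𝕜 ι) =
      (A : Matrix ι ι 𝕜) *ᵥ WithLp.ofLp (x : EuclideanSpace 𝕜 ι) :=
  rfl

noncomputable instance : MulAction (unitaryGroup ι 𝕜) (sphere (0 : EuclideanSpace 𝕜 ι) r) where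
  one_smul x := Subtype.ext (by simp)
  mul_smul A B x := Subtype.ext (by simp)

instance : ContinuousSMul (unitaryGroup ι 𝕜) (sphere (0 : EuclideanSpace 𝕜 ι) r) where
  continuous_smul := by
    refine Continuous.subtype_mk ?_ _
    change Continuous fun p : unitaryGroup ι 𝕜 × sphere (0 : EuclideanSpace 𝕜 ι) r ↦
      WithLp.toLp 2 ((p.1 : Matrix ι ι 𝕜) *ᵥ WithLp.ofLp (p.2 : EuclideanSpace 𝕜 ι))
    fun_prop

instance : IsPretransitive (orthogonalGroup ι ℝ) (sphere (0 : EuclideanSpace ℝ ι) r) where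
  exists_smul_eq x y := by
    let f := Submodule.reflection (ℝ ∙ ((x : EuclideanSpace ℝ ι) - y))ᗮ
    have hf : toEuclideanCLM (𝕜 := ℝ) ((toEuclideanCLM (n := ι) (𝕜 := ℝ)).symm f) ∈
        unitary (EuclideanSpace ℝ ι →L[ℝ] EuclideanSpace ℝ ι) := by
      simpa using (Unitary.linearIsometryEquiv.symm f).2
    refine ⟨⟨_, toEuclideanCLM_mem_unitary_iff.mp hf⟩, Subtype.ext ?_⟩
    have hxy : ‖(x : EuclideanSpace ℝ ι)‖ = ‖(y : EuclideanSpace ℝ ι)‖ := by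
      rw [norm_eq_of_mem_sphere, norm_eq_of_mem_sphere]
    simpa using Submodule.reflection_sub hxy

noncomputable instance : MulAction (unitaryGroup ι 𝕜) 𝐏(EuclideanSpace 𝕜 ι) where
  smul A := Quot.map (A • ·) fun x y h ↦ by simp [h]
  one_smul := Quot.ind fun x ↦ congrArg (Quot.mk _) (one_smul _ x)
  mul_smul A B := Quot.ind fun x ↦ congrArg (Quot.mk _) (mul_smul A B x)

theorem unitaryGroup_smul_antipodal_mk (A : unitaryGroup ι 𝕜)
    (x : sphere (0 : EuclideanSpace 𝕜 ι) 1) :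
    A • (Quot.mk _ x : 𝐏(EuclideanSpace 𝕜 ι)) = Quot.mk _ (A • x) :=
  rfl

instance : ContinuousSMul (unitaryGroup ι 𝕜) 𝐏(EuclideanSpace 𝕜 ι) where
  continuous_smul :=
    (IsOpenQuotientMap.id.prodMap isOpenQuotientMap_antipodal_mk).continuous_comp_iff.mp
      (continuous_quot_mk.comp continuous_smul)

instance : IsPretransitive (orthogonalGroup ι ℝ) 𝐏(EuclideanSpace ℝ ι) where
  exists_smul_eq := Quot.ind fun x ↦ Quot.ind fun y ↦
    (exists_smul_eq _ x y).imp fun _ h ↦ congrArg (Quot.mk _) h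

end Matrix

theorem e0_mem_sphere {n : ℕ} (hn : 1 ≤ n) : e0 n ∈ sphere (0 : EuclideanSpace ℝ (Fin n)) 1 := by
  have he0 : e0 n = EuclideanSpace.single (⟨0, hn⟩ : Fin n) 1 := by
    ext i
    simp [e0, PiLp.single_apply, Fin.ext_iff]
  simp [he0]

theorem stabilizer_antipodal_mk_e0 {n : ℕ} (he : e0 n ∈ sphere (0 : EuclideanSpace ℝ (Fin n)) 1) :
    stabilizer (orthogonalGroup (Fin n) ℝ) (Quot.mk _ ⟨e0 n, he⟩ : RP n) = stabLine n := by
  ext A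
  rw [mem_stabilizer_iff, unitaryGroup_smul_antipodal_mk, antipodal_mk_eq_mk_iff]
  simp [Subtype.ext_iff, WithLp.ext_iff, stabLine]

/-- `O(n)` acts continuously and transitively on `ℝP^{n-1}` by
`A • [x] = [A.mulVec x]`, and the induced map `O(n) ⧸ K → ℝP^{n-1}`, where `K`
is the stabilizer of the class `[e₀]`, is a homeomorphism. -/
theorem orthogonalGroup_quotient_homeomorph_projectiveSpace (n : ℕ) (hn : 1 ≤ n) :
    ∃ act : Matrix.orthogonalGroup (Fin n) ℝ → RP n → RP n,
      -- the action is induced by `A • [x] = [A.mulVec x]`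
      (∀ (A : Matrix.orthogonalGroup (Fin n) ℝ)
          (x : Metric.sphere (0 : EuclideanSpace ℝ (Fin n)) 1),
        ∃ y : Metric.sphere (0 : EuclideanSpace ℝ (Fin n)) 1,
          (y : EuclideanSpace ℝ (Fin n)) =
            (A : Matrix (Fin n) (Fin n) ℝ).mulVec (x : EuclideanSpace ℝ (Fin n)) ∧
          act A (Quot.mk _ x) = Quot.mk _ y) ∧
      -- it is an action: `1` acts as the identity and the action is compatible with
      -- multiplication
      (∀ u : RP n, act 1 u = u) ∧
      (∀ A B : Matrix.orthogonalGroup (Fin n) ℝ, ∀ u : RP n,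
        act (A * B) u = act A (act B u)) ∧
      -- continuity
      Continuous (fun p : Matrix.orthogonalGroup (Fin n) ℝ × RP n => act p.1 p.2) ∧
      -- transitivity
      (∀ u v : RP n, ∃ A : Matrix.orthogonalGroup (Fin n) ℝ, act A u = v) ∧
      -- orbit–stabilizer homeomorphism
      (∃ h : (Matrix.orthogonalGroup (Fin n) ℝ ⧸ stabLine n) ≃ₜ RP n,
        ∀ A : Matrix.orthogonalGroup (Fin n) ℝ,
          ∃ y : Metric.sphere (0 : EuclideanSpace ℝ (Fin n)) 1,
            (y : EuclideanSpace ℝ (Fin n)) =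
              (A : Matrix (Fin n) (Fin n) ℝ).mulVec (e0 n) ∧
            h (QuotientGroup.mk A) = Quot.mk _ y) := by
  obtain ⟨h, hh⟩ := exists_homeomorph_quotient_of_stabilizer_eq
    (stabilizer_antipodal_mk_e0 (e0_mem_sphere hn))
  refine ⟨(· • ·), fun A x ↦ ⟨A • x, ofLp_unitaryGroup_smul_sphere A x, rfl⟩, one_smul _, mul_smul,
    continuous_smul, exists_smul_eq _, h, fun A ↦ ⟨A • ⟨e0 n, e0_mem_sphere hn⟩, ?_, ?_⟩⟩
  · exact ofLp_unitaryGroup_smul_sphere A _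
  · rw [← unitaryGroup_smul_antipodal_mk]
    exact hh A
end

section
/- Let G be a topological group, let m ≥ 2, let S be the unit sphere of EuclideanSpace ℝ (Fin m), and let ρ : S → G be a continuous map satisfying ρ(−v) = (ρ v)⁻¹ for all v ∈ S. Then for every v ∈ S, the element ρ(v) * ρ(v) lies in the path component of the identity element of G. -/
/-!
Since `m ≥ 2` the sphere is path-connected, so a path from `-v` to `v` is carried by `ρ` to a
path from `ρ (-v) = (ρ v)⁻¹` to `ρ v`; right multiplication by `ρ v` turns it into a path from
`1` to `ρ v * ρ v`.
-/

open Metric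

theorem mul_self_mem_pathComponent_one_of_joined {X G : Type*} [TopologicalSpace X] [Group G]
    [TopologicalSpace G] [ContinuousMul G] {f : X → G} (hf : Continuous f) {x y : X}
    (hyx : Joined y x) (hfy : f y = (f x)⁻¹) : f x * f x ∈ pathComponent (1 : G) := by
  have h : Joined (f y * f x) (f x * f x) := (hyx.map hf).mul (Joined.refl (f x))
  rwa [hfy, inv_mul_cancel] at h

theorem pathConnectedSpace_sphere {E : Type*} [NormedAddCommGroup E] [NormedSpace ℝ E]
    (h : 1 < Module.rank ℝ E) (x : E) {r : ℝ} (hr : 0 ≤ r) : PathConnectedSpace (sphere x r) :=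
  isPathConnected_iff_pathConnectedSpace.mp (isPathConnected_sphere h x hr)

theorem one_lt_rank_euclideanSpace_fin {m : ℕ} (hm : 2 ≤ m) :
    1 < Module.rank ℝ (EuclideanSpace ℝ (Fin m)) := by
  rw [← Module.finrank_eq_rank, finrank_euclideanSpace_fin]
  exact_mod_cast hm

/-- If `ρ` is a continuous map from the sphere `S^{m-1}` (with `m ≥ 2`) to a
topological group `G` satisfying `ρ (-v) = (ρ v)⁻¹`, then each `ρ v * ρ v` lies in
the path component of the identity. -/
theorem sq_mem_pathComponent_one_of_antipodal_inv
    {G : Type*} [Group G] [TopologicalSpace G] [IsTopologicalGroup G]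
    (m : ℕ) (hm : 2 ≤ m)
    (ρ : Metric.sphere (0 : EuclideanSpace ℝ (Fin m)) 1 → G)
    (hρ : Continuous ρ)
    (hinv : ∀ v : Metric.sphere (0 : EuclideanSpace ℝ (Fin m)) 1, ρ (-v) = (ρ v)⁻¹) :
    ∀ v : Metric.sphere (0 : EuclideanSpace ℝ (Fin m)) 1,
      ρ v * ρ v ∈ pathComponent (1 : G) := by
  intro v
  have := pathConnectedSpace_sphere (one_lt_rank_euclideanSpace_fin hm) 0 zero_le_one
  exact mul_self_mem_pathComponent_one_of_joined hρ (PathConnectedSpace.joined (-v) v) (hinv v)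
end
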